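/- arXiv:2605.10570 — 3 statements merged into one kernel-verified Lean document; each statement's English description precedes it below -/
import Mathlib

section
/- Let $(T_t)$ be a sub-Markovian positive $C_0$-semigroup on $L^p(E;m)$ (i.e. $0 \le T_t f \le 1$ whenever $0 \le f \le 1$). If $u \in L^p(E;m)$ is supermedian (i.e. $u \ge 0$ and $T_t u \le u$ for all $t \ge 0$) and $\phi : [0,\infty) \to [0,\infty)$ is concave, then $\phi(u) \in L^p(E;m)$ and $\phi(u)$ is supermedian. -/
/-!
A nonnegative concave `φ` on `[0, ∞)` is nondecreasing, and at every `q > 0` it lies below an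
affine function `a y + b` with `a, b ≥ 0` that touches it at `q`. Positivity, `T_t 1 ≤ 1` and
`T_t u ≤ u` give `T_t φ(u) ≤ a T_t u + b T_t 1 ≤ a u + b`; letting `q` run through the rationals
above `u(x)` and using the continuity of `φ` on `(0, ∞)` yields `T_t φ(u) ≤ φ(u)` where `u > 0`.
On `{u = 0}`, where `φ` may jump, this is not enough: there `φ(u) - φ(0)` vanishes, so it is the
`L^p`-limit of `(φ(u) - φ(0)) ⊓ n u`, whose images under `T_t` are at most `n T_t u ≤ 0` on
`{u = 0}`.
-/

open MeasureTheory Filter Set Topology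

namespace ConvexOn

variable {S : Set ℝ} {f : ℝ → ℝ} {x y : ℝ}

lemma add_rightDeriv_mul_sub_le (hf : ConvexOn ℝ S f) (hx : x ∈ interior S) (hy : y ∈ S) :
    f x + derivWithin f (Ioi x) x * (y - x) ≤ f y := by
  rcases lt_trichotomy y x with hyx | rfl | hxy
  · have h := (hf.slope_le_leftDeriv_of_mem_interior hy hx hyx).trans
      (hf.leftDeriv_le_rightDeriv_of_mem_interior hx)
    rw [slope_def_field, div_le_iff₀ (sub_pos.2 hyx)] at h
    linarith
  · simp
  · have h := hf.rightDeriv_le_slope_of_mem_interior hx hy hxy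
    rw [slope_def_field, le_div_iff₀ (sub_pos.2 hxy)] at h
    linarith

end ConvexOn

namespace ConcaveOn

variable {φ : ℝ → ℝ}

lemma exists_affine_majorant_of_nonneg (hφ : ConcaveOn ℝ (Ici 0) φ)
    (hφ0 : ∀ y, 0 ≤ y → 0 ≤ φ y) {q : ℝ} (hq : 0 < q) :
    ∃ a b : ℝ, 0 ≤ a ∧ 0 ≤ b ∧ (∀ y, 0 ≤ y → φ y ≤ a * y + b) ∧ a * q + b = φ q := by
  set a := -derivWithin (-φ) (Ioi q) q
  have hle : ∀ y, 0 ≤ y → φ y ≤ φ q + a * (y - q) := fun y hy => by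
    have := hφ.neg.add_rightDeriv_mul_sub_le (by rwa [interior_Ici]) (mem_Ici.2 hy)
    simp only [Pi.neg_apply] at this
    linarith
  have ha : 0 ≤ a := by
    by_contra! ha
    have hy : 0 ≤ q - (φ q + 1) / a := by
      have : (φ q + 1) / a ≤ 0 := div_nonpos_of_nonneg_of_nonpos (by linarith [hφ0 q hq.le]) ha.le
      linarith
    -- at this `y ≥ 0` the majorant takes the value `-1`
    have h := hle _ hy
    rw [sub_sub_cancel_left, mul_neg, mul_div_cancel₀ _ ha.ne] at h
    linarith [hφ0 _ hy]
  refine ⟨a, φ q - a * q, ha, ?_, fun y hy => ?_, by ring⟩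
  · linarith [hle 0 le_rfl, hφ0 0 le_rfl]
  · linarith [hle y hy]

lemma monotoneOn_of_nonneg (hφ : ConcaveOn ℝ (Ici 0) φ) (hφ0 : ∀ y, 0 ≤ y → 0 ≤ φ y) :
    MonotoneOn φ (Ici 0) := by
  intro x hx y hy hxy
  rcases (mem_Ici.1 hy).eq_or_lt with rfl | hy
  · rw [le_antisymm hxy hx]
  obtain ⟨a, b, ha, -, hmaj, hy⟩ := hφ.exists_affine_majorant_of_nonneg hφ0 hy
  calc φ x ≤ a * x + b := hmaj x hx
    _ ≤ a * y + b := by gcongr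
    _ = φ y := hy

end ConcaveOn

namespace MeasureTheory

variable {E : Type*} [MeasurableSpace E] {μ : Measure E} {p : ENNReal}

lemma unifIntegrable_of_dominated {ι β : Type*} [NormedAddCommGroup β] (hp : 1 ≤ p)
    (hp' : p ≠ ⊤) {f : ι → E → β} {g : E → β} (hg : MemLp g p μ)
    (hfg : ∀ i, ∀ᵐ x ∂μ, ‖f i x‖ ≤ ‖g x‖) :
    UnifIntegrable f p μ := by
  intro ε hε
  obtain ⟨δ, hδ, hgδ⟩ := unifIntegrable_const (ι := ι) hp hp' hg hε
  refine ⟨δ, hδ, fun i s hs hμs => (eLpNorm_mono_ae ?_).trans (hgδ i s hs hμs)⟩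
  filter_upwards [hfg i] with x hx
  by_cases hxs : x ∈ s
  · simpa [hxs] using hx
  · simp [hxs]

lemma MemLp.concaveOn_comp [IsFiniteMeasure μ] {u : E → ℝ} (hu : MemLp u p μ)
    (hu0 : 0 ≤ᵐ[μ] u) {φ : ℝ → ℝ} (hφ : ConcaveOn ℝ (Ici 0) φ) (hφ0 : ∀ y, 0 ≤ y → 0 ≤ φ y) :
    MemLp (fun x => φ (u x)) p μ := by
  have hmono : Monotone fun y => φ (max y 0) := fun y z hyz =>
    hφ.monotoneOn_of_nonneg hφ0 (le_max_right y 0) (le_max_right z 0) (max_le_max_right 0 hyz)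
  have hmeas : AEStronglyMeasurable (fun x => φ (u x)) μ :=
    (hmono.measurable.comp_aemeasurable hu.1.aemeasurable).aestronglyMeasurable.congr
      (by filter_upwards [hu0] with x (hx : 0 ≤ u x); rw [Function.comp_apply, max_eq_left hx])
  obtain ⟨a, b, -, -, hmaj, -⟩ := hφ.exists_affine_majorant_of_nonneg hφ0 one_pos
  refine ((hu.const_mul a).add (memLp_const b)).of_le hmeas ?_
  filter_upwards [hu0] with x (hx : 0 ≤ u x)
  rw [Real.norm_of_nonneg (hφ0 _ hx)]
  exact (hmaj _ hx).trans (le_abs_self _)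

namespace Lp

lemma coeFn_smul_add_smul (a b : ℝ) (f g : Lp ℝ p μ) :
    ⇑(a • f + b • g) =ᵐ[μ] fun x => a * f x + b * g x := by
  filter_upwards [Lp.coeFn_add (a • f) (b • g), Lp.coeFn_smul a f, Lp.coeFn_smul b g]
    with x hadd hf hg
  rw [hadd, Pi.add_apply, hf, hg, Pi.smul_apply, Pi.smul_apply, smul_eq_mul, smul_eq_mul]

variable [Fact (1 ≤ p)] [IsFiniteMeasure μ] {S : Lp ℝ p μ →L[ℝ] Lp ℝ p μ} {φ : ℝ → ℝ}

lemma tendsto_inf_natCast_smul (hp : p ≠ ⊤) {f g : Lp ℝ p μ} (hg : 0 ≤ g)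
    (hfg : ∀ᵐ x ∂μ, g x = 0 → f x = 0) :
    Tendsto (fun n : ℕ => f ⊓ (n : ℝ) • g) atTop (𝓝 f) := by
  have hcoe : ∀ n : ℕ, ⇑(f ⊓ (n : ℝ) • g) =ᵐ[μ] fun x => min (f x) (n * g x) := fun n => by
    filter_upwards [Lp.coeFn_inf f ((n : ℝ) • g), Lp.coeFn_smul (n : ℝ) g] with x hinf hsmul
    rw [hinf, Pi.inf_apply, hsmul, Pi.smul_apply, smul_eq_mul]
  have hg0 := (Lp.coeFn_nonneg g).2 hg
  rw [Lp.tendsto_Lp_iff_tendsto_eLpNorm']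
  refine tendsto_Lp_finite_of_tendsto_ae Fact.out hp (fun n => Lp.aestronglyMeasurable _)
    (Lp.memLp f) ?_ ?_
  · refine unifIntegrable_of_dominated Fact.out hp (Lp.memLp f) fun n => ?_
    filter_upwards [hcoe n, hg0] with x hx (hgx : 0 ≤ g x)
    have hng : 0 ≤ n * g x := mul_nonneg n.cast_nonneg hgx
    rw [hx, Real.norm_eq_abs, Real.norm_eq_abs, abs_le]
    exact ⟨le_min (neg_abs_le _) ((neg_nonpos.2 (abs_nonneg _)).trans hng),
      (min_le_left _ _).trans (le_abs_self _)⟩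
  · filter_upwards [ae_all_iff.2 hcoe, hg0, hfg] with x hx (hgx : 0 ≤ g x) hfgx
    simp only [hx]
    rcases hgx.eq_or_lt with hgx | hgx
    · simp [← hgx, hfgx hgx.symm]
    · refine tendsto_const_nhds.congr' ?_
      filter_upwards [(tendsto_natCast_atTop_atTop.atTop_mul_const hgx).eventually_ge_atTop (f x)]
        with n hn
      exact (min_eq_left hn).symm

lemma ae_apply_nonpos_of_apply_nonpos (hp : p ≠ ⊤) (hS : Monotone S)
    {f g : Lp ℝ p μ} (hg : 0 ≤ g) (hfg : ∀ᵐ x ∂μ, g x = 0 → f x = 0) :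
    ∀ᵐ x ∂μ, S g x ≤ 0 → S f x ≤ 0 := by
  have hlim := (S.continuous.tendsto f).comp (tendsto_inf_natCast_smul hp hg hfg)
  obtain ⟨ns, -, hns⟩ := (tendstoInMeasure_of_tendsto_Lp hlim).exists_seq_tendsto_ae
  have hle : ∀ n : ℕ, ∀ᵐ x ∂μ, S (f ⊓ (n : ℝ) • g) x ≤ n * S g x := fun n => by
    have h : S (f ⊓ (n : ℝ) • g) ≤ (n : ℝ) • S g := map_smul S (n : ℝ) g ▸ hS inf_le_right
    filter_upwards [(Lp.coeFn_le _ _).2 h, Lp.coeFn_smul (n : ℝ) (S g)] with x hx hsmul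
    rwa [hsmul] at hx
  filter_upwards [hns, ae_all_iff.2 hle] with x hx hle hSg
  exact le_of_tendsto hx (Eventually.of_forall fun i =>
    (hle (ns i)).trans (mul_nonpos_of_nonneg_of_nonpos (Nat.cast_nonneg _) hSg))

lemma ae_apply_le_affine (hS : Monotone S)
    (hS1 : ∀ᵐ x ∂μ, S (Lp.const p μ 1) x ≤ 1) {u f : Lp ℝ p μ} (hSu : ∀ᵐ x ∂μ, S u x ≤ u x)
    {a b : ℝ} (ha : 0 ≤ a) (hb : 0 ≤ b) (hf : ∀ᵐ x ∂μ, f x ≤ a * u x + b) :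
    ∀ᵐ x ∂μ, S f x ≤ a * u x + b := by
  set one := Lp.const p μ (1 : ℝ)
  have hfle : f ≤ a • u + b • one := by
    rw [← Lp.coeFn_le]
    filter_upwards [hf, coeFn_smul_add_smul a b u one, Lp.coeFn_const p μ (1 : ℝ)]
      with x hfx hcoe hone
    rw [hcoe, hone, Function.const_apply, mul_one]
    exact hfx
  have hSf : S f ≤ a • S u + b • S one := by
    simpa only [map_add, map_smul] using hS hfle
  filter_upwards [(Lp.coeFn_le _ _).2 hSf, coeFn_smul_add_smul a b (S u) (S one), hSu, hS1]
    with x hSfx hcoe hSux hS1x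
  calc S f x ≤ a * S u x + b * S one x := hcoe ▸ hSfx
    _ ≤ a * u x + b * 1 := by gcongr
    _ = a * u x + b := by rw [mul_one]

lemma ae_apply_le_comp_of_pos (hS : Monotone S) (hS1 : ∀ᵐ x ∂μ, S (Lp.const p μ 1) x ≤ 1)
    {u w : Lp ℝ p μ} (hu : 0 ≤ u) (hSu : ∀ᵐ x ∂μ, S u x ≤ u x)
    (hφ : ConcaveOn ℝ (Ici 0) φ) (hφ0 : ∀ y, 0 ≤ y → 0 ≤ φ y) (hw : w =ᵐ[μ] fun x => φ (u x)) :
    ∀ᵐ x ∂μ, 0 < u x → S w x ≤ φ (u x) := by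
  have hu0 := (Lp.coeFn_nonneg u).2 hu
  have hrat : ∀ q : ℚ, ∀ᵐ x ∂μ, 0 < q → u x ≤ q → S w x ≤ φ q := fun q => by
    rcases lt_or_ge 0 q with hq | hq
    · obtain ⟨a, b, ha, hb, hmaj, hφq⟩ :=
        hφ.exists_affine_majorant_of_nonneg hφ0 (Rat.cast_pos.2 hq)
      have hwle : ∀ᵐ x ∂μ, w x ≤ a * u x + b := by
        filter_upwards [hw, hu0] with x hwx hux
        exact hwx ▸ hmaj _ hux
      filter_upwards [ae_apply_le_affine hS hS1 hSu ha hb hwle] with x hx _ huq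
      calc S w x ≤ a * u x + b := hx
        _ ≤ a * q + b := by gcongr
        _ = φ q := hφq
    · exact ae_of_all _ fun x hq' => absurd hq' hq.not_gt
  filter_upwards [ae_all_iff.2 hrat] with x hx hux
  have hgt : ∀ r, u x < r → S w x ≤ φ r := fun r hr => by
    obtain ⟨q, huq, hqr⟩ := exists_rat_btwn hr
    exact (hx q (Rat.cast_pos.1 (hux.trans huq)) huq.le).trans
      (hφ.monotoneOn_of_nonneg hφ0 (mem_Ici.2 (hux.trans huq).le)
        (mem_Ici.2 (hux.trans (huq.trans hqr)).le) hqr.le)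
  have hcont : ContinuousAt φ (u x) :=
    hφ.continuousOn_interior.continuousAt (by rw [interior_Ici]; exact Ioi_mem_nhds hux)
  exact ge_of_tendsto (hcont.tendsto.mono_left (nhdsWithin_le_nhds (s := Ioi (u x))))
    (eventually_nhdsWithin_of_forall hgt)

lemma ae_apply_le_of_eq_zero (hp : p ≠ ⊤) (hS : Monotone S)
    (hS1 : ∀ᵐ x ∂μ, S (Lp.const p μ 1) x ≤ 1) {u w : Lp ℝ p μ} (hu : 0 ≤ u)
    (hSu : ∀ᵐ x ∂μ, S u x ≤ u x) {c : ℝ} (hc : 0 ≤ c) (hw : ∀ᵐ x ∂μ, u x = 0 → w x = c) :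
    ∀ᵐ x ∂μ, u x = 0 → S w x ≤ c := by
  set one := Lp.const p μ (1 : ℝ)
  have hsub : ∀ f g : Lp ℝ p μ, ⇑(f - c • g) =ᵐ[μ] fun x => f x - c * g x := fun f g => by
    filter_upwards [Lp.coeFn_sub f (c • g), Lp.coeFn_smul c g] with x hsub hsmul
    rw [hsub, Pi.sub_apply, hsmul, Pi.smul_apply, smul_eq_mul]
  have hvanish : ∀ᵐ x ∂μ, u x = 0 → (w - c • one) x = 0 := by
    filter_upwards [hw, hsub w one, Lp.coeFn_const p μ (1 : ℝ)] with x hwx hcoe hone hux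
    rw [hcoe, hone, hwx hux, Function.const_apply, mul_one, sub_self]
  have hband := ae_apply_nonpos_of_apply_nonpos hp hS hu hvanish
  rw [map_sub, map_smul] at hband
  filter_upwards [hband, hsub (S w) (S one), hSu, hS1] with x hx hcoe hSux hS1x hux
  rw [hcoe, sub_nonpos] at hx
  calc S w x ≤ c * S one x := hx (hSux.trans hux.le)
    _ ≤ c * 1 := by gcongr
    _ = c := mul_one c

lemma apply_le_self_of_concaveOn_comp (hp : p ≠ ⊤) (hS : Monotone S)
    (hS1 : ∀ᵐ x ∂μ, S (Lp.const p μ 1) x ≤ 1) {u w : Lp ℝ p μ} (hu : 0 ≤ u)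
    (hSu : ∀ᵐ x ∂μ, S u x ≤ u x) (hφ : ConcaveOn ℝ (Ici 0) φ) (hφ0 : ∀ y, 0 ≤ y → 0 ≤ φ y)
    (hw : w =ᵐ[μ] fun x => φ (u x)) :
    S w ≤ w := by
  have hzero := ae_apply_le_of_eq_zero hp hS hS1 hu hSu (hφ0 0 le_rfl)
    (by filter_upwards [hw] with x hwx hux; rw [hwx, hux])
  rw [← Lp.coeFn_le]
  filter_upwards [ae_apply_le_comp_of_pos hS hS1 hu hSu hφ hφ0 hw, hzero, hw,
    (Lp.coeFn_nonneg u).2 hu] with x hpos hzero hwx (hux : 0 ≤ u x)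
  rw [hwx]
  rcases hux.eq_or_lt with hux | hux
  · rw [← hux]
    exact hzero hux.symm
  · exact hpos hux

end Lp

end MeasureTheory

theorem concave_comp_supermedian_general
    {E : Type*} [MeasurableSpace E] (μ : Measure E) [IsFiniteMeasure μ]
    (p : ENNReal) [Fact (1 ≤ p)] (hp : p ≠ ⊤)
    (T : ℝ → Lp ℝ p μ →L[ℝ] Lp ℝ p μ)
    (hpos : ∀ t : ℝ, 0 ≤ t → ∀ f : Lp ℝ p μ, 0 ≤ f → 0 ≤ T t f)
    (hsubMarkov : ∀ t : ℝ, 0 ≤ t → ∀ f : Lp ℝ p μ, 0 ≤ f →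
      (∀ᵐ x ∂μ, f x ≤ 1) → ∀ᵐ x ∂μ, (T t f) x ≤ 1)
    (u : Lp ℝ p μ) (hu0 : 0 ≤ u) (husup : ∀ t : ℝ, 0 ≤ t → T t u ≤ u)
    (φ : ℝ → ℝ) (hφconc : ConcaveOn ℝ (Set.Ici 0) φ)
    (hφ0 : ∀ y : ℝ, 0 ≤ y → 0 ≤ φ y) :
    MemLp (fun x => φ (u x)) p μ ∧
      ∃ w : Lp ℝ p μ, (w : E → ℝ) =ᵐ[μ] (fun x => φ (u x)) ∧
        0 ≤ w ∧ ∀ t : ℝ, 0 ≤ t → T t w ≤ w := by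
  have hu0' := (Lp.coeFn_nonneg u).2 hu0
  have hmem := (Lp.memLp u).concaveOn_comp hu0' hφconc hφ0
  have hone : ∀ᵐ x ∂μ, Lp.const p μ (1 : ℝ) x = 1 := Lp.coeFn_const p μ (1 : ℝ)
  have hone0 : 0 ≤ Lp.const p μ (1 : ℝ) := by
    rw [← Lp.coeFn_nonneg]
    filter_upwards [hone] with x hx
    rw [Pi.zero_apply, hx]
    exact zero_le_one
  refine ⟨hmem, hmem.toLp _, hmem.coeFn_toLp, ?_, fun t ht => ?_⟩
  · rw [← Lp.coeFn_nonneg]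
    filter_upwards [hmem.coeFn_toLp, hu0'] with x hx (hux : 0 ≤ u x)
    exact hx ▸ hφ0 _ hux
  · exact Lp.apply_le_self_of_concaveOn_comp hp ((monotone_iff_map_nonneg _).2 (hpos t ht))
      (hsubMarkov t ht _ hone0 (hone.mono fun x hx => hx.le)) hu0
      ((Lp.coeFn_le _ _).2 (husup t ht)) hφconc hφ0 hmem.coeFn_toLp

/-- If `(T t)` is a sub-Markovian positive `C₀`-semigroup on `L^p(E;m)`,
`u` is supermedian and `φ : [0,∞) → [0,∞)` is concave, then `φ(u) ∈ L^p` and `φ(u)`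
is supermedian. -/
theorem concave_comp_supermedian
    {E : Type*} [MeasurableSpace E] (μ : Measure E) [IsFiniteMeasure μ]
    (p : ENNReal) [Fact (1 ≤ p)] (hp : p ≠ ⊤)
    (T : ℝ → Lp ℝ p μ →L[ℝ] Lp ℝ p μ)
    (hsemigroup : T 0 = ContinuousLinearMap.id ℝ (Lp ℝ p μ) ∧
      ∀ s t : ℝ, 0 ≤ s → 0 ≤ t → T (s + t) = (T s).comp (T t))
    (hC0 : ∀ f : Lp ℝ p μ, Tendsto (fun t => T t f) (nhdsWithin 0 (Set.Ici 0)) (nhds f))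
    (hpos : ∀ t : ℝ, 0 ≤ t → ∀ f : Lp ℝ p μ, 0 ≤ f → 0 ≤ T t f)
    (hsubMarkov : ∀ t : ℝ, 0 ≤ t → ∀ f : Lp ℝ p μ, 0 ≤ f →
      (∀ᵐ x ∂μ, f x ≤ 1) → ∀ᵐ x ∂μ, (T t f) x ≤ 1)
    (u : Lp ℝ p μ) (hu0 : 0 ≤ u) (husup : ∀ t : ℝ, 0 ≤ t → T t u ≤ u)
    (φ : ℝ → ℝ) (hφconc : ConcaveOn ℝ (Set.Ici 0) φ)
    (hφ0 : ∀ y : ℝ, 0 ≤ y → 0 ≤ φ y) :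
    MemLp (fun x => φ (u x)) p μ ∧
      ∃ w : Lp ℝ p μ, (w : E → ℝ) =ᵐ[μ] (fun x => φ (u x)) ∧
        0 ≤ w ∧ ∀ t : ℝ, 0 ≤ t → T t w ≤ w :=
  concave_comp_supermedian_general μ p hp T hpos hsubMarkov u hu0 husup φ hφconc hφ0
end

section
/- Let $(T_t)$ be a sub-Markovian positive $C_0$-semigroup on $L^p(E;m)$, $1 \le p < \infty$, with $m$ a finite measure, whose generator $L$ satisfies $s(L) < 0$ and whose resolvent operators $R_\alpha = (\alpha - L)^{-1}$ are compact for $\alpha \ge 0$. Then every sequence $(v_n)$ of supermedian functions with $0 \le v_n \le 1$ admits a subsequence converging $m$-almost everywhere. -/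
open MeasureTheory Filter Topology
open scoped ENNReal

namespace DenyAux

variable {E : Type*} [MeasurableSpace E] {μ : Measure E} [IsFiniteMeasure μ]
  {p : ENNReal} [hp1 : Fact (1 ≤ p)]

lemma integrable_lp (f : Lp ℝ p μ) : Integrable f μ :=
  (Lp.memLp f).integrable hp1.out

lemma exists_int_bound (μ : Measure E) [IsFiniteMeasure μ] (p : ENNReal) [hp1 : Fact (1 ≤ p)]
    (hp : p ≠ ⊤) :
    ∃ C : ℝ, 0 ≤ C ∧ ∀ f : Lp ℝ p μ, ∫ x, |f x| ∂μ ≤ C * ‖f‖ := by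
  have hep : (0:ℝ) ≤ 1 - 1/p.toReal := by
    have h1 : (1:ℝ) ≤ p.toReal := by
      have := ENNReal.toReal_mono hp hp1.out
      simpa using this
    have : 1/p.toReal ≤ 1 := by
      rw [div_le_one (by linarith)]; linarith
    linarith
  refine ⟨((μ Set.univ) ^ (1 - 1/p.toReal)).toReal, ENNReal.toReal_nonneg, fun f => ?_⟩
  have h1 : eLpNorm f 1 μ ≤ eLpNorm f p μ * (μ Set.univ) ^ (1/(1:ℝ≥0∞).toReal - 1/p.toReal) :=
    eLpNorm_le_eLpNorm_mul_rpow_measure_univ hp1.out (Lp.aestronglyMeasurable f)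
  have h2 : ∫ x, |f x| ∂μ = (eLpNorm f 1 μ).toReal := by
    rw [eLpNorm_one_eq_lintegral_enorm]
    rw [show (fun x => |f x|) = fun x => ‖f x‖ from rfl]
    exact integral_norm_eq_lintegral_enorm (Lp.aestronglyMeasurable f)
  have hfin : eLpNorm f p μ * (μ Set.univ) ^ (1/(1:ℝ≥0∞).toReal - 1/p.toReal) ≠ ⊤ := by
    apply ENNReal.mul_ne_top (Lp.eLpNorm_ne_top f)
    exact ENNReal.rpow_ne_top_of_nonneg (by simpa using hep) (measure_ne_top μ _)
  rw [h2, Lp.norm_def]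
  calc (eLpNorm f 1 μ).toReal
      ≤ (eLpNorm f p μ * (μ Set.univ) ^ (1/(1:ℝ≥0∞).toReal - 1/p.toReal)).toReal :=
        ENNReal.toReal_mono hfin h1
    _ = ((μ Set.univ) ^ (1 - 1/p.toReal)).toReal * (eLpNorm f p μ).toReal := by
        rw [ENNReal.toReal_mul]
        norm_num
        ring
  
lemma exists_nonneg_rep (f : Lp ℝ p μ) (hf : 0 ≤ f) :
    ∃ g : E → ℝ, Measurable g ∧ (∀ x, 0 ≤ g x) ∧ ⇑f =ᵐ[μ] g := by
  obtain ⟨g0, hg0m, hg0⟩ := (Lp.aestronglyMeasurable f)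
  refine ⟨fun x => max (g0 x) 0, (hg0m.measurable.max measurable_const),
    fun x => le_max_right _ _, ?_⟩
  have hfnn : 0 ≤ᵐ[μ] ⇑f := (Lp.coeFn_nonneg f).mpr hf
  filter_upwards [hg0, hfnn] with x hx hxnn
  simp only [Pi.zero_apply] at hxnn
  rw [← hx]
  exact (max_eq_left hxnn).symm

lemma monotone_tendsto_of_subseq {u : ℕ → ℝ} (hu : Monotone u) {φ : ℕ → ℕ}
    (hφ : StrictMono φ) {L : ℝ} (h : Tendsto (u ∘ φ) atTop (𝓝 L)) :
    Tendsto u atTop (𝓝 L) := by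
  rcases tendsto_of_monotone hu with h1 | ⟨l, hl⟩
  · exfalso
    have : Tendsto (u ∘ φ) atTop atTop := h1.comp hφ.tendsto_atTop
    exact not_tendsto_atTop_of_tendsto_nhds h this
  · have h2 : Tendsto (u ∘ φ) atTop (𝓝 l) := hl.comp hφ.tendsto_atTop
    rwa [tendsto_nhds_unique h2 h] at hl

lemma integral_lp_mono (f g : Lp ℝ p μ) (h : f ≤ g) :
    ∫ x, f x ∂μ ≤ ∫ x, g x ∂μ :=
  integral_mono_ae (integrable_lp f) (integrable_lp g) ((Lp.coeFn_le f g).mpr h)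

lemma integral_lp_add (f g : Lp ℝ p μ) :
    ∫ x, (f + g) x ∂μ = ∫ x, f x ∂μ + ∫ x, g x ∂μ := by
  rw [integral_congr_ae (Lp.coeFn_add f g)]
  exact integral_add (integrable_lp f) (integrable_lp g)

lemma coeFn_sum_ae {ι : Type*} (f : ι → Lp ℝ p μ) (s : Finset ι) :
    ⇑(∑ c ∈ s, f c) =ᵐ[μ] fun x => ∑ c ∈ s, (f c) x := by
  classical
  induction s using Finset.induction_on with
  | empty => simp only [Finset.sum_empty]; exact Lp.coeFn_zero (E := ℝ) (p := p) (μ := μ)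
  | insert c s' hnotmem ih =>
    rw [Finset.sum_insert hnotmem]
    filter_upwards [Lp.coeFn_add (f c) (∑ x ∈ s', f x), ih] with x h1 h2
    rw [h1]
    simp only [Pi.add_apply]
    rw [h2, Finset.sum_insert hnotmem]

end DenyAux
set_option maxHeartbeats 1000000 in
/-- Deny-type compactness. Let `(T t)` be a sub-Markovian positive
`C₀`-semigroup on `L^p(E;m)` (`m` finite, `1 ≤ p < ∞`) with spectral bound `s(L) < 0` and
compact resolvent operators `R α = (α - L)⁻¹`, `α ≥ 0`. Then every sequence of supermedian
functions `(v n)` with `0 ≤ v n ≤ 1` admits a subsequence converging `m`-a.e. -/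
theorem deny_compactness_supermedian
    {E : Type*} [MeasurableSpace E] (μ : Measure E) [IsFiniteMeasure μ]
    (p : ENNReal) [Fact (1 ≤ p)] (hp : p ≠ ⊤)
    (T : ℝ → Lp ℝ p μ →L[ℝ] Lp ℝ p μ)
    (R : ℝ → Lp ℝ p μ →L[ℝ] Lp ℝ p μ)
    (hsemigroup : T 0 = ContinuousLinearMap.id ℝ (Lp ℝ p μ) ∧
      ∀ s t : ℝ, 0 ≤ s → 0 ≤ t → T (s + t) = (T s).comp (T t))
    (hC0 : ∀ f : Lp ℝ p μ, Tendsto (fun t => T t f) (nhdsWithin 0 (Set.Ici 0)) (nhds f))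
    (hTpos : ∀ t : ℝ, 0 ≤ t → ∀ f : Lp ℝ p μ, 0 ≤ f → 0 ≤ T t f)
    (hsubMarkov : ∀ t : ℝ, 0 ≤ t → ∀ f : Lp ℝ p μ, 0 ≤ f →
      (∀ᵐ x ∂μ, f x ≤ 1) → ∀ᵐ x ∂μ, (T t f) x ≤ 1)
    (hRcompact : ∀ α : ℝ, 0 ≤ α → IsCompactOperator (R α))
    (hRpos : ∀ α : ℝ, 0 ≤ α → ∀ f : Lp ℝ p μ, 0 ≤ f → 0 ≤ R α f)
    (hresolvent : ∀ α β : ℝ, 0 ≤ α → 0 ≤ β →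
      R α - R β = (β - α) • ((R α).comp (R β)))
    (hsupermedian_resolvent : ∀ v : Lp ℝ p μ, 0 ≤ v → (∀ t : ℝ, 0 ≤ t → T t v ≤ v) →
      ∀ α : ℝ, 0 < α → α • R α v ≤ v)
    (happrox : ∀ v : Lp ℝ p μ,
      Tendsto (fun n : ℕ => (n : ℝ) • R n v) atTop (nhds v))
    (v : ℕ → Lp ℝ p μ)
    (hv0 : ∀ n, 0 ≤ v n)
    (hv1 : ∀ n, ∀ᵐ x ∂μ, (v n) x ≤ 1)
    (hvsup : ∀ n, ∀ t : ℝ, 0 ≤ t → T t (v n) ≤ v n) :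
    ∃ φ : ℕ → ℕ, StrictMono φ ∧
      ∀ᵐ x ∂μ, ∃ l : ℝ, Tendsto (fun k => (v (φ k)) x) atTop (nhds l) := by
  classical
  have h1p : (1:ℝ≥0∞) ≤ p := Fact.out
  obtain ⟨Cμ, hCμ0, hCμ⟩ := DenyAux.exists_int_bound μ p hp
  set μT : ℝ := (μ Set.univ).toReal with hμT
  -- R 0 is monotone
  have hR0mono : ∀ a b : Lp ℝ p μ, a ≤ b → R 0 a ≤ R 0 b := by
    intro a b hab
    have h := hRpos 0 le_rfl (b - a) (by simpa [sub_nonneg] using hab)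
    rw [map_sub] at h
    simpa [sub_nonneg] using h
  -- supermedian facts
  have hkR : ∀ n : ℕ, ∀ k : ℕ, 1 ≤ k → (k:ℝ) • R k (v n) ≤ v n := by
    intro n k hk
    exact hsupermedian_resolvent (v n) (hv0 n) (hvsup n) k (by exact_mod_cast hk)
  have hRk0 : ∀ (n k : ℕ), 0 ≤ R (k:ℝ) (v n) := fun n k =>
    hRpos k (by positivity) _ (hv0 n)
  have hRkle : ∀ (n k : ℕ), 1 ≤ k → ∀ᵐ x ∂μ, (R (k:ℝ) (v n)) x ≤ 1/(k:ℝ) := by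
    intro n k hk
    have hkpos : (0:ℝ) < (k:ℝ) := by exact_mod_cast hk
    have h1 : (fun x => ((k:ℝ) • R k (v n)) x) ≤ᵐ[μ] v n := (Lp.coeFn_le _ _).mpr (hkR n k hk)
    filter_upwards [h1, hv1 n, Lp.coeFn_smul (k:ℝ) (R k (v n))] with x hx h1x hsx
    rw [hsx] at hx
    simp only [Pi.smul_apply, smul_eq_mul] at hx
    rw [le_div_iff₀ hkpos, mul_comm]
    exact hx.trans h1x
  -- resolvent identity consequences
  have hw0 : ∀ (n k : ℕ), 1 ≤ k →
      R 0 (v n - (k:ℝ) • R k (v n)) = R k (v n) := by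
    intro n k hk
    have h := hresolvent 0 k (le_refl 0) (by positivity)
    have h2 : R 0 (v n) - R k (v n) = (k:ℝ) • R 0 (R k (v n)) := by
      have := congrArg (fun (Q : Lp ℝ p μ →L[ℝ] Lp ℝ p μ) => Q (v n)) h
      simpa using this
    rw [map_sub, _root_.map_smul, ← h2]
    abel
  -- the N functional
  set N : Lp ℝ p μ → ℝ := fun u => ∫ x, (R 0 |u|) x ∂μ with hNdef
  -- key quantitative estimate
  have hKQ : ∀ i j : ℕ, ∀ k : ℕ, 1 ≤ k →
      N (v i - v j) ≤ 2*μT/(k:ℝ)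
        + (Cμ * ‖R 0‖) * ‖(k:ℝ) • R k (v i) - (k:ℝ) • R k (v j)‖ := by
    intro i j k hk
    have hkpos : (0:ℝ) < (k:ℝ) := by exact_mod_cast hk
    set wi : Lp ℝ p μ := v i - (k:ℝ) • R k (v i) with hwi
    set wj : Lp ℝ p μ := v j - (k:ℝ) • R k (v j) with hwj
    set z : Lp ℝ p μ := (k:ℝ) • R k (v i) - (k:ℝ) • R k (v j) with hz
    have hwi0 : 0 ≤ wi := by rw [hwi, sub_nonneg]; exact hkR i k hk
    have hwj0 : 0 ≤ wj := by rw [hwj, sub_nonneg]; exact hkR j k hk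
    have habs : |v i - v j| ≤ wi + wj + |z| := by
      rw [← Lp.coeFn_le]
      filter_upwards [Lp.coeFn_abs (v i - v j), Lp.coeFn_sub (v i) (v j),
        Lp.coeFn_add (wi + wj) |z|, Lp.coeFn_add wi wj, Lp.coeFn_abs z,
        Lp.coeFn_sub (v i) ((k:ℝ) • R k (v i)), Lp.coeFn_sub (v j) ((k:ℝ) • R k (v j)),
        Lp.coeFn_sub ((k:ℝ) • R k (v i)) ((k:ℝ) • R k (v j)),
        (Lp.coeFn_nonneg wi).mpr hwi0, (Lp.coeFn_nonneg wj).mpr hwj0]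
        with x e1 e2 e3 e4 e5 e6 e7 e8 e9 e10
      simp only [Pi.add_apply, Pi.sub_apply] at e2 e3 e4 e6 e7 e8
      rw [e1, e2, e3, e4, e5]
      have hzval : z x = ((k:ℝ) • R k (v i)) x - ((k:ℝ) • R k (v j)) x := e8
      have hwival : wi x = v i x - ((k:ℝ) • R k (v i)) x := e6
      have hwjval : wj x = v j x - ((k:ℝ) • R k (v j)) x := e7
      calc |v i x - v j x|
          = |(wi x - wj x) + z x| := by rw [hzval, hwival, hwjval]; ring_nf
        _ ≤ |wi x - wj x| + |z x| := abs_add_le _ _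
        _ ≤ (|wi x| + |wj x|) + |z x| := by
            have := abs_sub (wi x) (wj x); linarith
        _ = wi x + wj x + |z x| := by
            rw [abs_of_nonneg e9, abs_of_nonneg e10]
    have h2 : R 0 |v i - v j| ≤ R 0 wi + R 0 wj + R 0 |z| := by
      have := hR0mono _ _ habs
      rwa [map_add, map_add] at this
    have h3 : N (v i - v j) ≤ ∫ x, (R 0 wi) x ∂μ + ∫ x, (R 0 wj) x ∂μ
        + ∫ x, (R 0 |z|) x ∂μ := by
      have := DenyAux.integral_lp_mono _ _ h2
      calc N (v i - v j) ≤ ∫ x, (R 0 wi + R 0 wj + R 0 |z|) x ∂μ := this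
        _ = ∫ x, (R 0 wi + R 0 wj) x ∂μ + ∫ x, (R 0 |z|) x ∂μ :=
            DenyAux.integral_lp_add _ _
        _ = ∫ x, (R 0 wi) x ∂μ + ∫ x, (R 0 wj) x ∂μ + ∫ x, (R 0 |z|) x ∂μ := by
            rw [DenyAux.integral_lp_add]
    have h4 : ∀ m : ℕ, ∫ x, (R 0 (v m - (k:ℝ) • R k (v m))) x ∂μ ≤ μT/(k:ℝ) := by
      intro m
      rw [hw0 m k hk]
      have : ∫ x, ((R (k:ℝ)) (v m)) x ∂μ ≤ ∫ _x, 1/(k:ℝ) ∂μ :=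
        integral_mono_ae (DenyAux.integrable_lp _) (integrable_const _) (hRkle m k hk)
      rw [integral_const] at this
      calc ∫ x, ((R (k:ℝ)) (v m)) x ∂μ ≤ (μ Set.univ).toReal • (1/(k:ℝ)) := this
        _ = μT/(k:ℝ) := by rw [hμT]; simp [smul_eq_mul]; ring
    have h5 : ∫ x, (R 0 |z|) x ∂μ ≤ (Cμ * ‖R 0‖) * ‖z‖ := by
      have ha : ∫ x, (R 0 |z|) x ∂μ ≤ ∫ x, |(R 0 |z|) x| ∂μ :=
        integral_mono_ae (DenyAux.integrable_lp _) (DenyAux.integrable_lp _).abs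
          (Filter.Eventually.of_forall fun x => le_abs_self _)
      have hb : ∫ x, |(R 0 |z|) x| ∂μ ≤ Cμ * ‖R 0 |z|‖ := hCμ _
      have hc : ‖R 0 |z|‖ ≤ ‖R 0‖ * ‖z‖ := by
        calc ‖R 0 |z|‖ ≤ ‖R 0‖ * ‖|z|‖ := (R 0).le_opNorm _
          _ = ‖R 0‖ * ‖z‖ := by rw [norm_abs_eq_norm]
      calc ∫ x, (R 0 |z|) x ∂μ ≤ Cμ * ‖R 0 |z|‖ := ha.trans hb
        _ ≤ Cμ * (‖R 0‖ * ‖z‖) := by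
            apply mul_le_mul_of_nonneg_left hc hCμ0
        _ = (Cμ * ‖R 0‖) * ‖z‖ := by ring
    have : N (v i - v j) ≤ μT/(k:ℝ) + μT/(k:ℝ) + (Cμ * ‖R 0‖) * ‖z‖ :=
      h3.trans (add_le_add (add_le_add (h4 i) (h4 j)) h5)
    calc N (v i - v j) ≤ μT/(k:ℝ) + μT/(k:ℝ) + (Cμ * ‖R 0‖) * ‖z‖ := this
      _ = 2*μT/(k:ℝ) + (Cμ * ‖R 0‖) * ‖z‖ := by ring
  -- compactness extraction
  obtain ⟨y, φ₁, hφ₁, hconv⟩ : ∃ y, ∃ φ₁ : ℕ → ℕ, StrictMono φ₁ ∧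
      Tendsto (fun j => R 1 (v (φ₁ j))) atTop (𝓝 y) := by
    set oneL : Lp ℝ p μ := Lp.const p μ (1:ℝ) with honeL
    have hcc : ⇑oneL =ᵐ[μ] fun _ => (1:ℝ) := Lp.coeFn_const p μ (1:ℝ)
    have hbdd : ∀ n, v n ∈ Metric.closedBall (0 : Lp ℝ p μ) (‖oneL‖ + 1) := by
      intro n
      rw [Metric.mem_closedBall, dist_zero_right]
      have h1 : eLpNorm (⇑(v n)) p μ ≤ eLpNorm (⇑oneL) p μ := by
        apply eLpNorm_mono_ae
        filter_upwards [(Lp.coeFn_nonneg (v n)).mpr (hv0 n), hv1 n, hcc]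
          with x h0 h1x hcx
        rw [hcx]
        simp only [Pi.zero_apply] at h0
        rw [Real.norm_eq_abs, Real.norm_eq_abs, abs_of_nonneg h0, abs_of_nonneg zero_le_one]
        exact h1x
      have h2 : ‖v n‖ ≤ ‖oneL‖ := by
        rw [Lp.norm_def, Lp.norm_def]
        exact ENNReal.toReal_mono (Lp.eLpNorm_ne_top _) h1
      linarith
    have hK : IsCompact (closure (⇑(R 1) '' Metric.closedBall 0 (‖oneL‖+1))) := by
      exact IsCompactOperator.isCompact_closure_image_closedBall (𝕜₁ := ℝ)
        (f := ((R 1).toLinearMap)) (hRcompact 1 zero_le_one) _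
    obtain ⟨a, _, φ₁, hφ₁, hconv⟩ := hK.tendsto_subseq
      (x := fun n => R 1 (v n)) (fun n => subset_closure ⟨v n, hbdd n, rfl⟩)
    exact ⟨a, φ₁, hφ₁, hconv⟩
  have hkconv : ∀ k : ℕ, 1 ≤ k →
      CauchySeq (fun j => (k:ℝ) • R k (v (φ₁ j))) := by
    intro k hk
    have hid : ∀ u : Lp ℝ p μ, R k u = R 1 u + (1 - (k:ℝ)) • R k (R 1 u) := by
      intro u
      have h := hresolvent k 1 (by positivity) zero_le_one
      have h2 : R k u - R 1 u = (1 - (k:ℝ)) • R k (R 1 u) := by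
        have := congrArg (fun (Q : Lp ℝ p μ →L[ℝ] Lp ℝ p μ) => Q u) h
        simpa using this
      rw [← h2]; abel
    have h3 : Tendsto (fun j => R k (v (φ₁ j))) atTop
        (𝓝 (y + (1 - (k:ℝ)) • R k y)) := by
      have ht : Tendsto (fun j => R 1 (v (φ₁ j)) + (1 - (k:ℝ)) • R k (R 1 (v (φ₁ j))))
          atTop (𝓝 (y + (1 - (k:ℝ)) • R k y)) :=
        hconv.add ((((R k).continuous.tendsto y).comp hconv).const_smul (1 - (k:ℝ)))
      refine ht.congr (fun j => ?_)
      exact (hid _).symm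
    exact (h3.const_smul (k:ℝ)).cauchySeq
  have hNcauchy : ∀ ε : ℝ, 0 < ε → ∃ J : ℕ, ∀ i ≥ J, ∀ j ≥ J,
      N (v (φ₁ i) - v (φ₁ j)) ≤ ε := by
    intro ε hε
    set D : ℝ := Cμ * ‖R 0‖ with hD
    have hD0 : 0 ≤ D := mul_nonneg hCμ0 (norm_nonneg _)
    have hμT0 : 0 ≤ μT := ENNReal.toReal_nonneg
    obtain ⟨k, hk1, hkbig⟩ : ∃ k : ℕ, 1 ≤ k ∧ 2*μT/(k:ℝ) ≤ ε/2 := by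
      obtain ⟨k, hk⟩ := exists_nat_gt (max 1 (4*μT/ε))
      have hk1 : (1:ℝ) < k := lt_of_le_of_lt (le_max_left _ _) hk
      have hk2 : 4*μT/ε < k := lt_of_le_of_lt (le_max_right _ _) hk
      have hkpos : (0:ℝ) < k := by linarith
      refine ⟨k, by exact_mod_cast hk1.le, ?_⟩
      have hk3 : 4*μT < (k:ℝ)*ε := (div_lt_iff₀ hε).mp hk2
      rw [div_le_iff₀ hkpos]
      nlinarith
    set ε' : ℝ := ε/(2*(D+1)) with hε'
    have hε'pos : 0 < ε' := by positivity
    obtain ⟨J, hJ⟩ := Metric.cauchySeq_iff.mp (hkconv k hk1) ε' hε'pos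
    refine ⟨J, fun i hi j hj => ?_⟩
    have hdist := hJ i hi j hj
    rw [dist_eq_norm] at hdist
    have h6 := hKQ (φ₁ i) (φ₁ j) k hk1
    have h7 : D * ‖(k:ℝ) • R k (v (φ₁ i)) - (k:ℝ) • R k (v (φ₁ j))‖ ≤ D * ε' :=
      mul_le_mul_of_nonneg_left hdist.le hD0
    have h8 : D * ε' ≤ ε/2 := by
      have hkey : ε' * (D+1) = ε/2 := by
        rw [hε']; field_simp
      have h9 : D * ε' ≤ (D+1) * ε' :=
        mul_le_mul_of_nonneg_right (by linarith) hε'pos.le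
      rw [mul_comm (D+1) ε', hkey] at h9
      exact h9
    calc N (v (φ₁ i) - v (φ₁ j)) ≤ 2*μT/(k:ℝ)
          + D * ‖(k:ℝ) • R k (v (φ₁ i)) - (k:ℝ) • R k (v (φ₁ j))‖ := h6
      _ ≤ ε/2 + ε/2 := add_le_add hkbig (h7.trans h8)
      _ = ε := by ring
  obtain ⟨θ, hθ, hθN⟩ : ∃ θ : ℕ → ℕ, StrictMono θ ∧
      ∀ c : ℕ, N (v (φ₁ (θ (c+1))) - v (φ₁ (θ c))) ≤ (1/2)^c := by
    choose J hJ using fun c : ℕ => hNcauchy ((1/2)^c) (by positivity)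
    set θ : ℕ → ℕ := fun c => Nat.rec (J 0) (fun c ih => max (ih + 1) (J (c+1))) c with hθdef
    have hθsucc : ∀ c, θ (c+1) = max (θ c + 1) (J (c+1)) := fun c => rfl
    have hmono : StrictMono θ := strictMono_nat_of_lt_succ (fun c => by
      rw [hθsucc]
      exact lt_of_lt_of_le (Nat.lt_succ_self _) (le_max_left _ _))
    have hJle : ∀ c, J c ≤ θ c := by
      intro c
      cases c with
      | zero => exact le_refl _
      | succ c => rw [hθsucc]; exact le_max_right _ _
    refine ⟨θ, hmono, fun c => ?_⟩
    exact hJ c _ (le_trans (hJle c) (le_of_lt (hmono (Nat.lt_succ_self c)))) _ (hJle c)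
  set ψ : ℕ → ℕ := φ₁ ∘ θ with hψdef
  have hψ : StrictMono ψ := hφ₁.comp hθ
  set d : ℕ → Lp ℝ p μ := fun c => v (ψ (c+1)) - v (ψ c) with hddef
  have hdabs : ∀ c, (0:Lp ℝ p μ) ≤ |d c| := fun c => abs_nonneg _
  have hR0d : ∀ c, 0 ≤ R 0 |d c| := fun c => hRpos 0 le_rfl _ (hdabs c)
  choose w hwme hwnn hwae using fun c => DenyAux.exists_nonneg_rep (R 0 |d c|) (hR0d c)
  choose a hame hann haae using fun c => DenyAux.exists_nonneg_rep |d c| (hdabs c)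
  set G : E → ℝ≥0∞ := fun x => ∑' c, ENNReal.ofReal (w c x) with hGdef
  set S : E → ℝ≥0∞ := fun x => ∑' c, ENNReal.ofReal (a c x) with hSdef
  have hGmeas : Measurable G := Measurable.ennreal_tsum fun c => (hwme c).ennreal_ofReal
  have hSmeas : Measurable S := Measurable.ennreal_tsum fun c => (hame c).ennreal_ofReal
  have hNd : ∀ c, ∫ x, w c x ∂μ ≤ (1/2)^c := by
    intro c
    have : ∫ x, w c x ∂μ = N (d c) := (integral_congr_ae (hwae c)).symm
    rw [this]
    exact hθN c
  have hGint : ∫⁻ x, G x ∂μ ≠ ⊤ := by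
    have heq : ∫⁻ x, G x ∂μ = ∑' c, ∫⁻ x, ENNReal.ofReal (w c x) ∂μ :=
      lintegral_tsum (fun c => ((hwme c).ennreal_ofReal).aemeasurable)
    have hterm : ∀ c, ∫⁻ x, ENNReal.ofReal (w c x) ∂μ ≤ ENNReal.ofReal ((1/2)^c) := by
      intro c
      have hint : Integrable (w c) μ := (DenyAux.integrable_lp (R 0 |d c|)).congr (hwae c)
      have hnn : 0 ≤ᵐ[μ] w c := Filter.Eventually.of_forall (hwnn c)
      rw [← ofReal_integral_eq_lintegral_ofReal hint hnn]
      exact ENNReal.ofReal_le_ofReal (hNd c)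
    have hsum : Summable (fun c : ℕ => ((1:ℝ)/2)^c) :=
      summable_geometric_of_lt_one (by norm_num) (by norm_num)
    have : ∑' c, ∫⁻ x, ENNReal.ofReal (w c x) ∂μ ≤ ∑' c, ENNReal.ofReal (((1:ℝ)/2)^c) :=
      ENNReal.tsum_le_tsum hterm
    rw [← ENNReal.ofReal_tsum_of_nonneg (fun c => by positivity) hsum] at this
    rw [heq]
    exact ne_top_of_le_ne_top ENNReal.ofReal_ne_top this
  have hGae : ∀ᵐ x ∂μ, G x < ⊤ := ae_lt_top hGmeas hGint
  set A : Set E := {x | S x = ⊤} with hAdef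
  have hAmeas : MeasurableSet A := hSmeas (measurableSet_singleton ⊤)
  have hA : μ A = 0 := by
    by_contra hAne
    set oneA : Lp ℝ p μ := indicatorConstLp p hAmeas (measure_ne_top μ A) (1:ℝ) with honeA
    have honeA0 : 0 ≤ oneA := by
      rw [← Lp.coeFn_nonneg]
      filter_upwards [indicatorConstLp_coeFn (p := p) (hs := hAmeas)
        (hμs := measure_ne_top μ A) (c := (1:ℝ))] with x hx
      rw [Pi.zero_apply, hx]
      exact Set.indicator_nonneg (fun _ _ => zero_le_one) x
    have h0nn : 0 ≤ R 0 oneA := hRpos 0 le_rfl _ honeA0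
    have hpne0 : p ≠ 0 := (lt_of_lt_of_le zero_lt_one h1p).ne'
    have h0ne : R 0 oneA ≠ 0 := by
      intro h0eq
      have hRn0 : ∀ n : ℕ, R n oneA = 0 := by
        intro n
        have h := hresolvent n 0 (Nat.cast_nonneg n) le_rfl
        have h2 : R n oneA - R 0 oneA = (0 - (n:ℝ)) • R n (R 0 oneA) := by
          have := congrArg (fun (Q : Lp ℝ p μ →L[ℝ] Lp ℝ p μ) => Q oneA) h
          simpa using this
        rw [h0eq] at h2
        simpa using h2
      have happ := happrox oneA
      have hzero : Tendsto (fun n : ℕ => (n:ℝ) • R n oneA) atTop (𝓝 (0 : Lp ℝ p μ)) := by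
        have : (fun n : ℕ => (n:ℝ) • R n oneA) = fun _ : ℕ => (0 : Lp ℝ p μ) := by
          funext n; rw [hRn0 n, smul_zero]
        rw [this]
        exact tendsto_const_nhds
      have hone0 : oneA = 0 := tendsto_nhds_unique happ hzero
      have hnorm : ‖oneA‖ = ‖(1:ℝ)‖ * (μ A).toReal ^ (1/p.toReal) :=
        norm_indicatorConstLp hpne0 hp
      rw [hone0, norm_zero] at hnorm
      have hApos : 0 < (μ A).toReal :=
        ENNReal.toReal_pos hAne (measure_ne_top μ A)
      have hppos : 0 < 1/p.toReal := by
        have h1 : (1:ℝ) ≤ p.toReal := by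
          have := ENNReal.toReal_mono hp h1p
          simpa using this
        positivity
      have : (0:ℝ) < ‖(1:ℝ)‖ * (μ A).toReal ^ (1/p.toReal) := by
        rw [norm_one, one_mul]
        exact Real.rpow_pos_of_pos hApos _
      linarith [this, hnorm.symm.le]
    have hpos : μ {x | 0 < (R 0 oneA) x} ≠ 0 := by
      intro hz
      have hle : ∀ᵐ x ∂μ, ¬ (0 < (R 0 oneA) x) := by
        rw [ae_iff]
        simpa using hz
      have heq0 : (R 0 oneA : Lp ℝ p μ) = 0 := by
        apply Lp.ext
        filter_upwards [hle, (Lp.coeFn_nonneg (R 0 oneA)).mpr h0nn,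
          Lp.coeFn_zero (E := ℝ) (p := p) (μ := μ)] with x hx1 hx2 hx3
        rw [hx3]
        simp only [Pi.zero_apply] at hx2 ⊢
        linarith [not_lt.mp hx1]
      exact h0ne heq0
    have hMbound : ∀ M : ℕ, ∀ᵐ x ∂μ, ENNReal.ofReal ((M:ℝ) * (R 0 oneA) x) ≤ G x := by
      intro M
      set F : ℕ → E → ℝ := fun J x => ∑ c ∈ Finset.range J, a c x with hFdef
      have hFmeas : ∀ J, Measurable (F J) := fun J =>
        Finset.measurable_sum _ (fun c _ => hame c)
      have hFmono : ∀ x, Monotone fun J => F J x := by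
        intro x
        apply monotone_nat_of_le_succ
        intro J
        rw [hFdef]
        simp only [Finset.sum_range_succ]
        have := hann J x
        linarith
      have hF0 : ∀ J x, 0 ≤ F J x := fun J x =>
        Finset.sum_nonneg (fun c _ => hann c x)
      set B : ℕ → Set E := fun J => {x | (M:ℝ) ≤ F J x} with hBdef
      have hBmeas : ∀ J, MeasurableSet (B J) :=
        fun J => measurableSet_le measurable_const (hFmeas J)
      have hBmono : Monotone B := by
        intro J J' hJJ x hx
        exact le_trans hx (hFmono x hJJ)
      set Cs : Set E := ⋃ J, B J with hCsdef
      have hCmeas : MeasurableSet Cs := MeasurableSet.iUnion hBmeas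
      have hAC : A ⊆ Cs := by
        intro x hxA
        by_contra hxC
        simp only [hCsdef, Set.mem_iUnion, not_exists] at hxC
        have hlt : ∀ J, ENNReal.ofReal (F J x) ≤ ENNReal.ofReal (M:ℝ) := by
          intro J
          exact ENNReal.ofReal_le_ofReal (le_of_not_ge (hxC J))
        have hSle : S x ≤ ENNReal.ofReal (M:ℝ) := by
          have hSx : S x = ∑' (c:ℕ), ENNReal.ofReal (a c x) := rfl
          rw [hSx, ENNReal.tsum_eq_iSup_nat]
          apply iSup_le
          intro J
          have : ∑ c ∈ Finset.range J, ENNReal.ofReal (a c x) = ENNReal.ofReal (F J x) := by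
            rw [hFdef, ENNReal.ofReal_sum_of_nonneg (fun c _ => hann c x)]
          rw [this]
          exact hlt J
        have : S x = ⊤ := hxA
        rw [this] at hSle
        exact ENNReal.ofReal_ne_top (eq_top_iff.mpr hSle)
      set oneB : ℕ → Lp ℝ p μ := fun J =>
        indicatorConstLp p (hBmeas J) (measure_ne_top μ _) (1:ℝ) with honeB
      set oneC : Lp ℝ p μ :=
        indicatorConstLp p hCmeas (measure_ne_top μ _) (1:ℝ) with honeC
      -- pointwise a.e. facts about |d c| sums
      have habsa : ∀ᵐ x ∂μ, ∀ c, (|d c| : Lp ℝ p μ) x = a c x := ae_all_iff.mpr haae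
      -- the key Lp-order inequality
      have hkey : ∀ J, (M:ℝ) • R 0 (oneB J) ≤ ∑ c ∈ Finset.range J, R 0 |d c| := by
        intro J
        have h1 : (M:ℝ) • oneB J ≤ ∑ c ∈ Finset.range J, |d c| := by
          rw [← Lp.coeFn_le]
          filter_upwards [Lp.coeFn_smul (M:ℝ) (oneB J),
            indicatorConstLp_coeFn (p := p) (hs := hBmeas J)
              (hμs := measure_ne_top μ (B J)) (c := (1:ℝ)),
            DenyAux.coeFn_sum_ae (fun c => |d c|) (Finset.range J), habsa]
            with x e1 e2 e3 e4
          rw [e1, e3]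
          simp only [Pi.smul_apply, smul_eq_mul]
          rw [e2]
          have hsum_eq : ∑ c ∈ Finset.range J, (|d c| : Lp ℝ p μ) x = F J x := by
            rw [hFdef]
            exact Finset.sum_congr rfl (fun c _ => e4 c)
          rw [hsum_eq]
          by_cases hxB : x ∈ B J
          · rw [Set.indicator_of_mem hxB, mul_one]
            exact hxB
          · rw [Set.indicator_of_notMem hxB, mul_zero]
            exact hF0 J x
        have h2 := hR0mono _ _ h1
        rwa [_root_.map_smul, map_sum] at h2
      have hptJ : ∀ᵐ x ∂μ, ∀ J,
          (M:ℝ) * (R 0 (oneB J)) x ≤ ∑ c ∈ Finset.range J, w c x := by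
        rw [ae_all_iff]
        intro J
        filter_upwards [(Lp.coeFn_le _ _).mpr (hkey J),
          Lp.coeFn_smul (M:ℝ) (R 0 (oneB J)),
          DenyAux.coeFn_sum_ae (fun c => R 0 |d c|) (Finset.range J),
          ae_all_iff.mpr hwae] with x e1 e2 e3 e4
        rw [e2, e3] at e1
        simp only [Pi.smul_apply, smul_eq_mul] at e1
        refine e1.trans (le_of_eq ?_)
        exact Finset.sum_congr rfl (fun c _ => e4 c)
      -- Lp convergence of indicators
      have hdiffmeas : ∀ J, MeasurableSet (Cs \ B J) := fun J => hCmeas.diff (hBmeas J)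
      have hsubind : ∀ J, oneC - oneB J =
          indicatorConstLp p (hdiffmeas J) (measure_ne_top μ _) (1:ℝ) := by
        intro J
        apply Lp.ext
        have hBC : B J ⊆ Cs := by
          intro x hx
          exact Set.mem_iUnion.mpr ⟨J, hx⟩
        filter_upwards [Lp.coeFn_sub oneC (oneB J),
          indicatorConstLp_coeFn (p := p) (hs := hCmeas)
            (hμs := measure_ne_top μ Cs) (c := (1:ℝ)),
          indicatorConstLp_coeFn (p := p) (hs := hBmeas J)
            (hμs := measure_ne_top μ (B J)) (c := (1:ℝ)),
          indicatorConstLp_coeFn (p := p) (hs := hdiffmeas J)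
            (hμs := measure_ne_top μ (Cs \ B J)) (c := (1:ℝ))] with x e1 e2 e3 e4
        rw [e1]
        simp only [Pi.sub_apply]
        rw [e2, e3, e4]
        by_cases hxB : x ∈ B J
        · rw [Set.indicator_of_mem hxB, Set.indicator_of_mem (hBC hxB),
            Set.indicator_of_notMem (fun h => (Set.mem_diff x).mp h |>.2 hxB)]
          ring
        · rw [Set.indicator_of_notMem hxB]
          by_cases hxC : x ∈ Cs
          · rw [Set.indicator_of_mem hxC, Set.indicator_of_mem ((Set.mem_diff x).mpr ⟨hxC, hxB⟩)]
            ring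
          · rw [Set.indicator_of_notMem hxC,
              Set.indicator_of_notMem (fun h => hxC ((Set.mem_diff x).mp h).1)]
            ring
      have hμtend : Tendsto (fun J => μ (Cs \ B J)) atTop (𝓝 0) := by
        have hanti : Antitone (fun J => Cs \ B J) := by
          intro J J' hJJ x hx
          simp only [Set.mem_diff] at hx ⊢
          exact ⟨hx.1, fun hmem => hx.2 (hBmono hJJ hmem)⟩
        have hinter : ⋂ J, (Cs \ B J) = ∅ := by
          apply Set.eq_empty_iff_forall_notMem.mpr
          intro x hx
          rw [Set.mem_iInter] at hx
          have h0 := hx 0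
          rw [Set.mem_diff] at h0
          obtain ⟨J, hJ⟩ := Set.mem_iUnion.mp h0.1
          have hJ2 := hx J
          rw [Set.mem_diff] at hJ2
          exact hJ2.2 hJ
        have := tendsto_measure_iInter_atTop
          (fun J => (hdiffmeas J).nullMeasurableSet) hanti ⟨0, measure_ne_top μ _⟩
        rw [hinter, measure_empty] at this
        exact this
      have hBtoC : Tendsto oneB atTop (𝓝 oneC) := by
        rw [tendsto_iff_norm_sub_tendsto_zero]
        have hnormeq : ∀ J, ‖oneB J - oneC‖ = (μ (Cs \ B J)).toReal ^ (1/p.toReal) := by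
          intro J
          rw [← norm_neg, neg_sub, hsubind J, norm_indicatorConstLp hpne0 hp]
          rw [norm_one, one_mul]
          rfl
        have h1 : Tendsto (fun J => (μ (Cs \ B J)).toReal) atTop (𝓝 0) := by
          have := (ENNReal.tendsto_toReal (a := 0) (by simp)).comp hμtend
          exact this
        have h2 : Tendsto (fun J => (μ (Cs \ B J)).toReal ^ (1/p.toReal)) atTop
            (𝓝 ((0:ℝ) ^ (1/p.toReal))) := by
          have hcont := Real.continuousAt_rpow_const 0 (1/p.toReal)
            (Or.inr (by positivity))
          exact (hcont.tendsto.comp h1)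
        have hppos : 0 < 1/p.toReal := by
          have ha : (1:ℝ) ≤ p.toReal := by
            have := ENNReal.toReal_mono hp h1p
            simpa using this
          positivity
        rw [Real.zero_rpow hppos.ne'] at h2
        refine h2.congr (fun J => ?_)
        exact (hnormeq J).symm
      have hR0tend : Tendsto (fun J => R 0 (oneB J)) atTop (𝓝 (R 0 oneC)) :=
        ((R 0).continuous.tendsto oneC).comp hBtoC
      obtain ⟨ns, hns, haeconv⟩ :=
        (tendstoInMeasure_of_tendsto_Lp hR0tend).exists_seq_tendsto_ae
      have hmonoae : ∀ᵐ x ∂μ, ∀ J, (R 0 (oneB J)) x ≤ (R 0 (oneB (J+1))) x := by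
        rw [ae_all_iff]
        intro J
        have hle : oneB J ≤ oneB (J+1) := by
          rw [← Lp.coeFn_le]
          filter_upwards [indicatorConstLp_coeFn (p := p) (hs := hBmeas J)
              (hμs := measure_ne_top μ (B J)) (c := (1:ℝ)),
            indicatorConstLp_coeFn (p := p) (hs := hBmeas (J+1))
              (hμs := measure_ne_top μ (B (J+1))) (c := (1:ℝ))] with x e1 e2
          rw [e1, e2]
          by_cases hxB : x ∈ B J
          · rw [Set.indicator_of_mem hxB,
              Set.indicator_of_mem (hBmono (Nat.le_succ J) hxB)]
          · rw [Set.indicator_of_notMem hxB]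
            exact Set.indicator_nonneg (fun _ _ => zero_le_one) x
        exact (Lp.coeFn_le _ _).mpr (hR0mono _ _ hle)
      have haefull : ∀ᵐ x ∂μ,
          Tendsto (fun J => (R 0 (oneB J)) x) atTop (𝓝 ((R 0 oneC) x)) := by
        filter_upwards [haeconv, hmonoae] with x hx1 hx2
        exact DenyAux.monotone_tendsto_of_subseq (monotone_nat_of_le_succ hx2) hns hx1
      have hACle : R 0 oneA ≤ R 0 oneC := by
        apply hR0mono
        rw [← Lp.coeFn_le]
        filter_upwards [indicatorConstLp_coeFn (p := p) (hs := hAmeas)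
            (hμs := measure_ne_top μ A) (c := (1:ℝ)),
          indicatorConstLp_coeFn (p := p) (hs := hCmeas)
            (hμs := measure_ne_top μ Cs) (c := (1:ℝ))] with x e1 e2
        rw [e1, e2]
        by_cases hxA : x ∈ A
        · rw [Set.indicator_of_mem hxA, Set.indicator_of_mem (hAC hxA)]
        · rw [Set.indicator_of_notMem hxA]
          exact Set.indicator_nonneg (fun _ _ => zero_le_one) x
      filter_upwards [hptJ, haefull, (Lp.coeFn_le _ _).mpr hACle] with x hx1 hx2 hx3
      by_cases hGx : G x = ⊤
      · rw [hGx]; exact le_top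
      · have hb : ∀ J, (M:ℝ) * (R 0 (oneB J)) x ≤ (G x).toReal := by
          intro J
          have h5 : ENNReal.ofReal (∑ c ∈ Finset.range J, w c x) ≤ G x := by
            rw [ENNReal.ofReal_sum_of_nonneg (fun c _ => hwnn c x), hGdef]
            exact ENNReal.sum_le_tsum _
          have h6 : ∑ c ∈ Finset.range J, w c x ≤ (G x).toReal := by
            have := ENNReal.toReal_mono hGx h5
            rwa [ENNReal.toReal_ofReal
              (Finset.sum_nonneg (fun c _ => hwnn c x))] at this
          linarith [hx1 J]
        have hlim : (M:ℝ) * (R 0 oneC) x ≤ (G x).toReal :=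
          le_of_tendsto (hx2.const_mul (M:ℝ)) (Filter.Eventually.of_forall hb)
        have hfin : (M:ℝ) * (R 0 oneA) x ≤ (G x).toReal :=
          le_trans (mul_le_mul_of_nonneg_left hx3 (Nat.cast_nonneg M)) hlim
        exact ENNReal.ofReal_le_of_le_toReal hfin
    have hall : ∀ᵐ x ∂μ,
        (∀ M : ℕ, ENNReal.ofReal ((M:ℝ) * (R 0 oneA) x) ≤ G x) ∧ G x < ⊤ :=
      (ae_all_iff.mpr hMbound).and hGae
    obtain ⟨x, hx1, hx2, hx3⟩ : ∃ x, 0 < (R 0 oneA) x ∧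
        (∀ M : ℕ, ENNReal.ofReal ((M:ℝ) * (R 0 oneA) x) ≤ G x) ∧ G x < ⊤ := by
      by_contra hcon
      push_neg at hcon
      apply hpos
      have hae2 : ∀ᵐ x ∂μ, ¬ (0 < (R 0 oneA) x) := by
        filter_upwards [hall] with x hx
        intro hlt
        exact (not_lt.mpr (hcon x hlt hx.1)) hx.2
      rw [ae_iff] at hae2
      simpa using hae2
    obtain ⟨M, hM⟩ := exists_nat_gt ((G x).toReal / ((R 0 oneA) x))
    have hMgt : (G x).toReal < (M:ℝ) * (R 0 oneA) x := by
      rw [div_lt_iff₀ hx1] at hM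
      linarith
    have hle2 := hx2 M
    rw [← ENNReal.ofReal_toReal hx3.ne] at hle2
    have := (ENNReal.ofReal_le_ofReal_iff ENNReal.toReal_nonneg).mp hle2
    linarith
  -- conclusion
  refine ⟨ψ, hψ, ?_⟩
  have hS_ae : ∀ᵐ x ∂μ, S x ≠ ⊤ := by
    have h1 : ∀ᵐ x ∂μ, x ∉ A := measure_eq_zero_iff_ae_notMem.mp hA
    filter_upwards [h1] with x hx
    simpa [hAdef] using hx
  have habs_eq : ∀ᵐ x ∂μ, ∀ c, a c x = |d c x| := by
    rw [ae_all_iff]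
    intro c
    filter_upwards [haae c, Lp.coeFn_abs (d c)] with x h1 h2
    rw [← h1, h2]
  have hd_eq : ∀ᵐ x ∂μ, ∀ c, d c x = v (ψ (c+1)) x - v (ψ c) x := by
    rw [ae_all_iff]
    intro c
    filter_upwards [Lp.coeFn_sub (v (ψ (c+1))) (v (ψ c))] with x h1
    exact h1
  filter_upwards [hS_ae, habs_eq, hd_eq] with x hx h1 h2
  have hsum0 : Summable (fun c => |d c x|) := by
    apply summable_of_sum_range_le (c := (S x).toReal) (fun c => abs_nonneg _)
    intro J
    have e1 : ENNReal.ofReal (∑ c ∈ Finset.range J, |d c x|)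
        = ∑ c ∈ Finset.range J, ENNReal.ofReal (a c x) := by
      rw [ENNReal.ofReal_sum_of_nonneg (fun c _ => abs_nonneg _)]
      exact Finset.sum_congr rfl (fun c _ => by rw [h1 c])
    have e2 : ∑ c ∈ Finset.range J, ENNReal.ofReal (a c x) ≤ S x :=
      ENNReal.sum_le_tsum _
    have e3 : ENNReal.ofReal (∑ c ∈ Finset.range J, |d c x|) ≤ S x := e1.le.trans e2
    have e4 := ENNReal.toReal_mono hx e3
    rwa [ENNReal.toReal_ofReal (Finset.sum_nonneg (fun c _ => abs_nonneg _))] at e4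
  have hsum : Summable (fun c => d c x) := hsum0.of_abs
  have hpart : Tendsto (fun J => ∑ c ∈ Finset.range J, d c x) atTop
      (𝓝 (∑' c, d c x)) := hsum.hasSum.tendsto_sum_nat
  have hident : ∀ J, (v (ψ J)) x = (v (ψ 0)) x + ∑ c ∈ Finset.range J, d c x := by
    intro J
    induction J with
    | zero => simp
    | succ J ih =>
      rw [Finset.sum_range_succ, ← add_assoc, ← ih, h2 J]
      ring
  refine ⟨(v (ψ 0)) x + ∑' c, d c x, ?_⟩
  have := (tendsto_const_nhds (x := (v (ψ 0)) x) (f := atTop)).add hpart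
  refine this.congr (fun J => ?_)
  exact (hident J).symm
end

section
/- Let $(v_n)$ be a sequence of measurable functions on a finite measure space with $0 \le v_n \le 1$, converging weakly-star in $\sigma(L^\infty, L^1)$ to $v$, and suppose that $\liminf_{n\to\infty} v_n \ge v$ almost everywhere. Then some subsequence of $(v_n)$ converges to $v$ almost everywhere. -/
/-!
Testing the weak-star convergence against `g = 1_{v < 0} / (1 - v)`, for which both `g` and `v g`
are bounded, shows `v ≥ 0`; together with `v ≤ liminf vₙ ≤ 1` this makes `v` integrable.
The liminf hypothesis gives `(vₙ - v)⁻ → 0` a.e., hence in `L¹` by dominated convergence, and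
testing against `g = 1` gives `∫ vₙ → ∫ v`. Since `|a| = 2 a⁻ + a`, it follows that `vₙ → v`
in `L¹`, hence in measure, and a subsequence converges a.e.
-/

open MeasureTheory Filter Topology

section

variable {E ι : Type*} [MeasurableSpace E] {μ : Measure E} {l : Filter ι}

theorem ae_nonneg_of_tendsto_integral_mul [IsFiniteMeasure μ] [l.NeBot]
    {fn : ι → E → ℝ} {f : E → ℝ} (hf : Measurable f) (hfn : ∀ i, ∀ᵐ x ∂μ, 0 ≤ fn i x)
    (hweak : ∀ g : E → ℝ, Integrable g μ →
      Tendsto (fun i => ∫ x, fn i x * g x ∂μ) l (𝓝 (∫ x, f x * g x ∂μ))) :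
    ∀ᵐ x ∂μ, 0 ≤ f x := by
  set S := {x | f x < 0}
  have hS : MeasurableSet S := measurableSet_lt hf measurable_const
  set g := S.indicator fun x => (1 - f x)⁻¹
  have hg_meas : Measurable g := (hf.const_sub 1).inv.indicator hS
  have hfg_neg : ∀ x ∈ S, -1 < f x * g x ∧ f x * g x < 0 := by
    intro x (hx : f x < 0)
    have hpos : 0 < 1 - f x := by linarith
    simp only [g, Set.indicator_of_mem (show x ∈ S from hx), ← div_eq_mul_inv,
      lt_div_iff₀ hpos, div_neg_iff]
    constructor <;> [linarith; exact Or.inr ⟨hx, hpos⟩]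
  have hbounds : ∀ x, g x ∈ Set.Icc 0 1 ∧ f x * g x ∈ Set.Icc (-1) 0 := by
    intro x
    by_cases hx : x ∈ S
    · have hx' : f x < 0 := hx
      have := hfg_neg x hx
      simp only [g, Set.indicator_of_mem hx] at this ⊢
      exact ⟨⟨by bound, inv_le_one_of_one_le₀ (by linarith)⟩, this.1.le, this.2.le⟩
    · simp [g, hx]
  have hg_int : Integrable g μ :=
    .of_bound hg_meas.aestronglyMeasurable 1 (ae_of_all _ fun x =>
      abs_le.2 ⟨by linarith [(hbounds x).1.1], (hbounds x).1.2⟩)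
  have hfg_int : Integrable (fun x => f x * g x) μ :=
    .of_bound (hf.mul hg_meas).aestronglyMeasurable 1 (ae_of_all _ fun x =>
      abs_le.2 ⟨(hbounds x).2.1, by linarith [(hbounds x).2.2]⟩)
  have h_int_nonneg : 0 ≤ ∫ x, f x * g x ∂μ :=
    ge_of_tendsto (hweak g hg_int) (Eventually.of_forall fun i =>
      integral_nonneg_of_ae ((hfn i).mono fun x hx => mul_nonneg hx (hbounds x).1.1))
  have hfg_nonpos : ∀ x, f x * g x ≤ 0 := fun x => (hbounds x).2.2
  have hfg_zero : ∀ᵐ x ∂μ, -(f x * g x) = 0 := by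
    refine (integral_eq_zero_iff_of_nonneg (fun x => neg_nonneg.2 (hfg_nonpos x)) hfg_int.neg).1 ?_
    rw [integral_neg, (integral_nonpos hfg_nonpos).antisymm h_int_nonneg, neg_zero]
  filter_upwards [hfg_zero] with x hx
  by_contra hneg
  exact (hfg_neg x (not_le.1 hneg)).2.ne (neg_eq_zero.1 hx)

theorem tendsto_negPart_sub_of_le_liminf {u : ι → ℝ} {a : ℝ}
    (hu : IsBoundedUnder (· ≥ ·) l u) (ha : a ≤ liminf u l) :
    Tendsto (fun i => (u i - a)⁻) l (𝓝 0) := by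
  refine tendsto_order.2 ⟨fun b hb => .of_forall fun i => hb.trans_le (negPart_nonneg _),
    fun ε hε => ?_⟩
  filter_upwards [eventually_lt_of_lt_liminf (show a - ε < liminf u l by linarith) hu] with i hi
  rw [negPart_def]
  exact max_lt (by linarith) hε

theorem tendsto_integral_negPart_sub_of_le_liminf {fn : ℕ → E → ℝ} {f : E → ℝ}
    (hfn : ∀ n, AEStronglyMeasurable (fn n) μ) (hf : Integrable f μ)
    (hfn_nonneg : ∀ n, ∀ᵐ x ∂μ, 0 ≤ fn n x)
    (hlim : ∀ᵐ x ∂μ, f x ≤ liminf (fun n => fn n x) atTop) :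
    Tendsto (fun n => ∫ x, (fn n x - f x)⁻ ∂μ) atTop (𝓝 0) := by
  have hdom : ∀ n, ∀ᵐ x ∂μ, ‖(fn n x - f x)⁻‖ ≤ |f x| := fun n => by
    filter_upwards [hfn_nonneg n] with x hx
    rw [Real.norm_of_nonneg (negPart_nonneg _), negPart_def]
    exact max_le (by linarith [le_abs_self (f x)]) (abs_nonneg _)
  have hlim' : ∀ᵐ x ∂μ, Tendsto (fun n => (fn n x - f x)⁻) atTop (𝓝 0) := by
    filter_upwards [hlim, ae_all_iff.2 hfn_nonneg] with x hx hx0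
    exact tendsto_negPart_sub_of_le_liminf (isBoundedUnder_of ⟨0, hx0⟩) hx
  simpa using tendsto_integral_of_dominated_convergence (fun x => |f x|)
    (fun n => ((hfn n).sub hf.1).negPart) hf.abs hdom hlim'

theorem tendsto_integral_abs_sub_of_tendsto_integral_negPart {fn : ι → E → ℝ} {f : E → ℝ}
    (hfn : ∀ i, Integrable (fn i) μ) (hf : Integrable f μ)
    (hint : Tendsto (fun i => ∫ x, fn i x ∂μ) l (𝓝 (∫ x, f x ∂μ)))
    (hneg : Tendsto (fun i => ∫ x, (fn i x - f x)⁻ ∂μ) l (𝓝 0)) :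
    Tendsto (fun i => ∫ x, |fn i x - f x| ∂μ) l (𝓝 0) := by
  have hsub : Tendsto (fun i => ∫ x, fn i x - f x ∂μ) l (𝓝 0) := by
    simpa [integral_sub (hfn _) hf] using hint.sub_const (∫ x, f x ∂μ)
  have hsplit (i : ι) := integral_abs_eq_two_mul_integral_negPart_add_integral
    (f := fun x => fn i x - f x) ((hfn i).sub hf)
  simpa only [hsplit, mul_zero, add_zero] using (hneg.const_mul 2).add hsub

theorem tendsto_eLpNorm_one_sub_of_tendsto_integral_abs_sub {fn : ι → E → ℝ} {f : E → ℝ}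
    (hfn : ∀ i, Integrable (fn i) μ) (hf : Integrable f μ)
    (h : Tendsto (fun i => ∫ x, |fn i x - f x| ∂μ) l (𝓝 0)) :
    Tendsto (fun i => eLpNorm (fn i - f) 1 μ) l (𝓝 0) := by
  have heq : ∀ i, eLpNorm (fn i - f) 1 μ = ENNReal.ofReal (∫ x, |fn i x - f x| ∂μ) := fun i => by
    rw [eLpNorm_one_eq_lintegral_enorm, ← ofReal_integral_norm_eq_lintegral_enorm ((hfn i).sub hf)]
    rfl
  simpa [heq] using ENNReal.tendsto_ofReal h

end

/-- Dellacherie–Meyer lemma. If `(vₙ)` are measurable, `0 ≤ vₙ ≤ 1`,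
converge weakly-star in `σ(L^∞, L^1)` to `v`, and `liminf vₙ ≥ v` a.e., then some
subsequence of `(vₙ)` converges to `v` a.e. -/
theorem weakStar_liminf_ae_subsequence
    {E : Type*} [MeasurableSpace E] (μ : Measure E) [IsFiniteMeasure μ]
    (vn : ℕ → E → ℝ) (v : E → ℝ)
    (hmeas : ∀ n, Measurable (vn n)) (hvmeas : Measurable v)
    (hbd : ∀ n, ∀ᵐ x ∂μ, vn n x ∈ Set.Icc (0 : ℝ) 1)
    (hweak : ∀ g : E → ℝ, Integrable g μ →
      Tendsto (fun n => ∫ x, vn n x * g x ∂μ) atTop (nhds (∫ x, v x * g x ∂μ)))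
    (hliminf : ∀ᵐ x ∂μ, v x ≤ liminf (fun n => vn n x) atTop) :
    ∃ φ : ℕ → ℕ, StrictMono φ ∧
      ∀ᵐ x ∂μ, Tendsto (fun k => vn (φ k) x) atTop (nhds (v x)) := by
  have hvn_nonneg : ∀ n, ∀ᵐ x ∂μ, 0 ≤ vn n x := fun n => (hbd n).mono fun _ hx => hx.1
  have hv_nonneg : ∀ᵐ x ∂μ, 0 ≤ v x := ae_nonneg_of_tendsto_integral_mul hvmeas hvn_nonneg hweak
  have hv_le_one : ∀ᵐ x ∂μ, v x ≤ 1 := by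
    filter_upwards [hliminf, ae_all_iff.2 hbd] with x hx hx01
    exact hx.trans (liminf_le_of_frequently_le (.of_forall fun n => (hx01 n).2)
      (isBoundedUnder_of ⟨0, fun n => (hx01 n).1⟩))
  have hvn_int : ∀ n, Integrable (vn n) μ := fun n =>
    .of_bound (hmeas n).aestronglyMeasurable 1 <| (hbd n).mono fun _ hx =>
      abs_le.2 ⟨by linarith [hx.1], hx.2⟩
  have hv_int : Integrable v μ :=
    .of_bound hvmeas.aestronglyMeasurable 1 <| (hv_nonneg.and hv_le_one).mono fun _ hx =>
      abs_le.2 ⟨by linarith [hx.1], hx.2⟩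
  have hint : Tendsto (fun n => ∫ x, vn n x ∂μ) atTop (𝓝 (∫ x, v x ∂μ)) := by
    simpa only [mul_one] using hweak (fun _ => 1) (integrable_const 1)
  have hL1 := tendsto_eLpNorm_one_sub_of_tendsto_integral_abs_sub hvn_int hv_int <|
    tendsto_integral_abs_sub_of_tendsto_integral_negPart hvn_int hv_int hint <|
      tendsto_integral_negPart_sub_of_le_liminf (fun n => (hvn_int n).1) hv_int hvn_nonneg hliminf
  exact (tendstoInMeasure_of_tendsto_eLpNorm one_ne_zero (fun n => (hmeas n).aestronglyMeasurable)
    hvmeas.aestronglyMeasurable hL1).exists_seq_tendsto_ae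
end
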